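/- arXiv:2008.06206 — 6 statements merged into one kernel-verified Lean document; each statement's English description precedes it below -/
import Mathlib

section
/- With the hypotheses of the V-split setup, assume in addition that V acts trivially on H/K, i.e. [H, V] ⊆ K. If some character in Irr(K | χ̃) is V-split, then every character in Irr(K | χ̃) is V-split. -/
/-!
By Clifford's theorem any two irreducible constituents of `χ̃|_K` are `H`-conjugate, say
`χ(y) = χ₀(x y x⁻¹)` with `x ∈ H`. Conjugation by `x` carries `(HV)_χ` onto
`(HV)_χ₀ = H_χ₀ V_χ₀`, so every `g ∈ (HV)_χ` is `x⁻¹ a v x` with `a ∈ H_χ₀` and `v ∈ V_χ₀`.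
As `[H, V] ⊆ K`, `x⁻¹ v x = c v` with `c ∈ K ≤ H_χ`, hence `g = (x⁻¹ a x c) v ∈ H_χ V_χ`.

For Clifford's theorem, the character inner products give nonzero intertwiners `f : X₀ → W|_K`
and `g : W|_K → X`; irreducibility of `W` yields `t ∈ H` with `g ∘ W(t) ∘ f ≠ 0`, an intertwiner
from a conjugate of `X₀` to `X`, and Schur's lemma identifies the characters.
-/

open scoped Pointwise

/-- For a subgroup `M` of `L` and a function `θ : L → ℂ` (thought of as a character of a
subgroup of `L`, extended by zero), the stabilizer `M_θ` of `θ` in `M` under the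
conjugation action `θ^x(k) = θ(x k x⁻¹)`. -/
def charStab {L : Type} [Group L] (M : Subgroup L) (θ : L → ℂ) : Subgroup L where
  carrier := {m | m ∈ M ∧ ∀ x : L, θ (m * x * m⁻¹) = θ x}
  one_mem' := ⟨M.one_mem, fun x => by simp⟩
  mul_mem' := by
    rintro a b ⟨haM, ha⟩ ⟨hbM, hb⟩
    refine ⟨M.mul_mem haM hbM, fun x => ?_⟩
    have h : a * b * x * (a * b)⁻¹ = a * (b * x * b⁻¹) * a⁻¹ := by group
    rw [h, ha, hb]
  inv_mem' := by
    rintro a ⟨haM, ha⟩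
    refine ⟨M.inv_mem haM, fun x => ?_⟩
    have h := ha (a⁻¹ * x * a)
    have e : a * (a⁻¹ * x * a) * a⁻¹ = x := by group
    rw [e] at h
    have e2 : a⁻¹ * x * a⁻¹⁻¹ = a⁻¹ * x * a := by group
    rw [e2]
    exact h.symm

/-- `θ` is (the extension by zero of) an irreducible complex character of the subgroup
`K` of `L`. -/
def IsIrrCharOf {L : Type} [Group L] (K : Subgroup L) (θ : L → ℂ) : Prop :=
  (∀ x : L, x ∉ K → θ x = 0) ∧
  ∃ V : FDRep ℂ ↥K, CategoryTheory.Simple V ∧ ∀ k : ↥K, θ ↑k = V.character k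

/-- `χ` is an irreducible constituent of the restriction to `K` of the character `χt`:
the (unnormalized) inner product over `K` of `χt` with `χ` is nonzero. -/
def IsConstituent {L : Type} [Group L] (K : Subgroup L) (χt χ : L → ℂ) : Prop :=
  ∑ᶠ x ∈ (K : Set L), χt x * (starRingEnd ℂ) (χ x) ≠ 0

/-- A character `χ` of `K` is `V`-split (with respect to `H`) if `(HV)_χ = H_χ V_χ`. -/
def IsVSplit {L : Type} [Group L] (H V : Subgroup L) (χ : L → ℂ) : Prop :=
  ((charStab (H ⊔ V) χ : Subgroup L) : Set L)
    = ((charStab H χ : Subgroup L) : Set L) * ((charStab V χ : Subgroup L) : Set L)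


namespace Module.End

theorem pow_apply_of_mem_eigenspace {R M : Type*} [CommRing R] [AddCommGroup M] [Module R M]
    {f : Module.End R M} {μ : R} {v : M} (hv : v ∈ f.eigenspace μ) (m : ℕ) :
    (f ^ m) v = μ ^ m • v := by
  induction m with
  | zero => simp
  | succ m ih => rw [pow_succ', mul_apply, ih, map_smul, mem_eigenspace_iff.1 hv, smul_smul,
      pow_succ]

theorem IsSemisimple.exists_trace_pow_eq_sum {K V : Type*} [Field K] [IsAlgClosed K]
    [AddCommGroup V] [Module K V] [FiniteDimensional K V] {A : Module.End K V}
    (hA : A.IsSemisimple) :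
    ∃ s : Finset K, (∀ μ ∈ s, A.HasEigenvalue μ) ∧ ∀ m : ℕ,
      LinearMap.trace K V (A ^ m) = ∑ μ ∈ s, μ ^ m * Module.finrank K (A.eigenspace μ) := by
  classical
  have hint : DirectSum.IsInternal A.eigenspace :=
    DirectSum.isInternal_submodule_of_iSupIndep_of_iSup_eq_top A.eigenspaces_iSupIndep
      hA.iSup_eigenspace_eq_top
  have hfin := WellFoundedGT.finite_ne_bot_of_iSupIndep A.eigenspaces_iSupIndep
  refine ⟨hfin.toFinset, fun μ hμ => hfin.mem_toFinset.1 hμ, fun m => ?_⟩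
  have hmaps μ := mapsTo_genEigenspace_of_comm ((Commute.refl A).pow_right m) μ 1
  rw [LinearMap.trace_eq_sum_trace_restrict' hint hfin hmaps]
  refine Finset.sum_congr rfl fun μ _ => ?_
  have : (A ^ m).restrict (hmaps μ) = μ ^ m • LinearMap.id := by
    ext v
    exact pow_apply_of_mem_eigenspace v.2 m
  rw [this, map_smul, LinearMap.trace_id, smul_eq_mul]

-- `A` is diagonalizable with eigenvalues `μ` on the unit circle, where `conj μ = μ ^ (n - 1)`.
theorem trace_pow_sub_one_eq_conj_trace {V : Type*} [AddCommGroup V] [Module ℂ V]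
    [FiniteDimensional ℂ V] {A : Module.End ℂ V} {n : ℕ} (hn : n ≠ 0)
    (hA : A ^ n = 1) :
    LinearMap.trace ℂ V (A ^ (n - 1)) = starRingEnd ℂ (LinearMap.trace ℂ V A) := by
  have hss : A.IsSemisimple := by
    refine isSemisimple_of_squarefree_aeval_eq_zero
      (Polynomial.separable_X_pow_sub_C (1 : ℂ) (by exact_mod_cast hn) one_ne_zero).squarefree ?_
    simp [hA]
  obtain ⟨s, hs, htr⟩ := hss.exists_trace_pow_eq_sum
  have htr1 := htr 1
  rw [pow_one] at htr1
  rw [htr, htr1, map_sum]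
  refine Finset.sum_congr rfl fun μ hμ => ?_
  have hμn : μ ^ n = 1 := by
    obtain ⟨v, hv⟩ := (hs μ hμ).exists_hasEigenvector
    have h := hv.pow_apply n
    rw [hA, one_apply, ← one_smul ℂ v, smul_smul, mul_one] at h
    exact (smul_left_injective ℂ hv.2 h).symm
  rw [map_mul, map_natCast, pow_one μ,
    ← Complex.inv_eq_conj (Complex.norm_eq_one_of_pow_eq_one hμn hn),
    eq_inv_of_mul_eq_one_left (a := μ ^ (n - 1)) (by rw [pow_sub_one_mul hn, hμn])]

end Module.End

namespace Representation

theorem char_inv_eq_conj {G V : Type*} [Group G] [Finite G] [AddCommGroup V] [Module ℂ V]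
    [FiniteDimensional ℂ V] (ρ : Representation ℂ G V) (g : G) :
    ρ.character g⁻¹ = starRingEnd ℂ (ρ.character g) := by
  have hn : Nat.card G ≠ 0 := Nat.card_pos.ne'
  have hg : g⁻¹ = g ^ (Nat.card G - 1) :=
    (eq_inv_of_mul_eq_one_left (by rw [pow_sub_one_mul hn, pow_card_eq_one'])).symm
  rw [character, character, hg, map_pow]
  exact Module.End.trace_pow_sub_one_eq_conj_trace hn (by rw [← map_pow, pow_card_eq_one', map_one])

variable {k G V W : Type*} [Field k] [AddCommGroup V] [Module k V] [AddCommGroup W] [Module k W]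

theorem IsIrreducible.comp {G' : Type*} [Monoid G] [Monoid G'] (ρ : Representation k G V)
    [IsIrreducible ρ] (f : G' →* G) (hf : Function.Surjective f) : IsIrreducible (ρ.comp f) :=
  let e : Subrepresentation (ρ.comp f) ≃o Subrepresentation ρ :=
    { toFun p := ⟨p.toSubmodule, fun g v hv => by
        obtain ⟨g', rfl⟩ := hf g
        exact p.apply_mem_toSubmodule g' hv⟩
      invFun p := ⟨p.toSubmodule, fun g v hv => p.apply_mem_toSubmodule (f g) hv⟩
      left_inv _ := rfl
      right_inv _ := rfl
      map_rel_iff' := Iff.rfl }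
  e.isSimpleOrder_iff.2 inferInstance

theorem IsIrreducible.exists_apply_ne_zero [Monoid G] {ρ : Representation k G V}
    [IsIrreducible ρ] {f : V →ₗ[k] W} (hf : f ≠ 0) {v : V} (hv : v ≠ 0) :
    ∃ g, f (ρ g v) ≠ 0 := by
  let p : Subrepresentation ρ := ⟨⨅ g, LinearMap.ker (f ∘ₗ ρ g), fun h v hv => by
    simp only [Submodule.mem_iInf, LinearMap.mem_ker, LinearMap.comp_apply] at hv ⊢
    intro g
    rw [← Module.End.mul_apply, ← map_mul]
    exact hv (g * h)⟩
  have hp : p ≠ ⊤ := fun h => hf <| LinearMap.ext fun w => by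
    have : w ∈ p := h ▸ Submodule.mem_top (R := k)
    simpa using (Submodule.mem_iInf _).1 this 1
  have hvp : v ∉ p := fun h => hv <| by
    rwa [(eq_bot_or_eq_top p).resolve_right hp] at h
  change v ∉ ⨅ g, LinearMap.ker (f ∘ₗ ρ g) at hvp
  simpa [Submodule.mem_iInf] using hvp

theorem char_eq_of_intertwiningMap_ne_zero [Monoid G] [FiniteDimensional k V]
    {ρ : Representation k G V} {σ : Representation k G W} [IsIrreducible ρ] [IsIrreducible σ]
    {f : IntertwiningMap ρ σ} (hf : f ≠ 0) : ρ.character = σ.character :=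
  char_iso (f.ofBijective ((IsIrreducible.bijective_or_eq_zero f).resolve_right hf))

theorem exists_intertwiningMap_ne_zero_of_sum_ne_zero [Group G] [Fintype G]
    [Invertible (Nat.card G : k)] [FiniteDimensional k V] [FiniteDimensional k W]
    {ρ : Representation k G V} {σ : Representation k G W}
    (h : ∑ g : G, σ.character g * ρ.character g⁻¹ ≠ 0) : ∃ f : IntertwiningMap ρ σ, f ≠ 0 := by
  by_contra! hzero
  have : Subsingleton (IntertwiningMap ρ σ) := ⟨fun f g => (hzero f).trans (hzero g).symm⟩
  have := card_inv_mul_sum_char_mul_char_eq_finrank ρ σ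
  rw [Module.finrank_zero_of_subsingleton, Nat.cast_zero] at this
  exact h ((mul_eq_zero.1 this).resolve_left (inv_ne_zero (Invertible.ne_zero _)))

theorem exists_char_eq_char_conj {L X X₀ : Type*} [Group L] {H K : Subgroup L}
    [AddCommGroup X] [Module k X] [AddCommGroup X₀] [Module k X₀] [FiniteDimensional k X₀]
    (hKH : K ≤ H) (hHK : H ≤ Subgroup.normalizer (K : Set L))
    {ρ : Representation k H V} {σ : Representation k K X} {σ₀ : Representation k K X₀}
    [IsIrreducible ρ] [IsIrreducible σ] [IsIrreducible σ₀]
    {f : IntertwiningMap σ₀ (ρ.comp (Subgroup.inclusion hKH))} (hf : f ≠ 0)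
    {g : IntertwiningMap (ρ.comp (Subgroup.inclusion hKH)) σ} (hg : g ≠ 0) :
    ∃ s : H, ∀ n : K, σ.character n = σ₀.character (K.normalizerMonoidHom ⟨s, hHK s.2⟩ n) := by
  obtain ⟨v, hv⟩ : ∃ v, f v ≠ 0 := by
    by_contra! h
    exact hf (IntertwiningMap.ext (LinearMap.ext h))
  obtain ⟨t, ht⟩ := IsIrreducible.exists_apply_ne_zero (ρ := ρ) (f := g.toLinearMap)
    (fun h => hg (IntertwiningMap.ext h)) hv
  let τ : K →* K := (K.normalizerMonoidHom ⟨t⁻¹, hHK (inv_mem t.2)⟩ : MulAut K).toMonoidHom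
  have hτ : ∀ n : K, t * Subgroup.inclusion hKH (τ n) = Subgroup.inclusion hKH n * t := by
    intro n
    ext
    simp [τ, mul_assoc]
  let ψ : IntertwiningMap (σ₀.comp τ) σ :=
    (g.toLinearMap ∘ₗ ρ t ∘ₗ f.toLinearMap).intertwiningMap_of_isIntertwiningMap _ _ fun n w => by
      simp only [LinearMap.comp_apply, MonoidHom.comp_apply, IntertwiningMap.toLinearMap_apply,
        f.isIntertwining, ← Module.End.mul_apply, ← map_mul, hτ]
      rw [map_mul, Module.End.mul_apply]
      exact IntertwiningMap.isIntertwining _ _ g n _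
  have hψ : ψ ≠ 0 := fun h => ht congr($h v)
  have := IsIrreducible.comp σ₀ τ (MulEquiv.surjective _)
  exact ⟨t⁻¹, fun n => congr_fun (char_eq_of_intertwiningMap_ne_zero hψ).symm n⟩

end Representation

open CategoryTheory Representation in
theorem FDRep.isIrreducible_ρ {k G : Type*} [Field k] [Group G] (X : FDRep k G) [Simple X] :
    IsIrreducible X.ρ := by
  have : Nontrivial X := by
    by_contra h
    rw [not_nontrivial_iff_subsingleton] at h
    refine Simple.not_isZero X ((Limits.IsZero.iff_id_eq_zero X).2 ?_)
    ext v
    exact Subsingleton.elim _ _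
  refine { exists_pair_ne := ?_, eq_bot_or_eq_top := fun p => ?_ }
  · obtain ⟨v, hv⟩ := exists_ne (0 : X)
    refine ⟨⊥, ⊤, fun h => hv ?_⟩
    have : v ∈ (⊤ : Subrepresentation X.ρ) := Submodule.mem_top (R := k)
    rw [← h] at this
    exact this
  · let i : FDRep.of p.toRepresentation ⟶ X := ⟨FGModuleCat.ofHom p.toSubmodule.subtype,
      fun g => by ext v; rfl⟩
    have : Mono i := ConcreteCategory.mono_of_injective i Subtype.val_injective
    refine (eq_or_ne p ⊥).imp id fun hp => ?_
    have : IsIso i := isIso_of_mono_of_nonzero fun h => hp ?_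
    · apply Subrepresentation.toSubmodule_injective
      refine Submodule.eq_top_iff'.2 fun v => ?_
      obtain ⟨w, rfl⟩ := (ConcreteCategory.bijective_of_isIso i).2 v
      exact w.2
    · apply Subrepresentation.toSubmodule_injective
      refine (Submodule.eq_bot_iff _).2 fun v hv => ?_
      exact congr(ConcreteCategory.hom $h ⟨v, hv⟩)

section Characters

variable {L : Type} [Group L]

theorem isConstituent_iff_sum_ne_zero {K : Subgroup L} [Fintype K] {χt χ : L → ℂ} :
    IsConstituent K χt χ ↔ ∑ n : K, χt n * starRingEnd ℂ (χ n) ≠ 0 := by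
  rw [IsConstituent, ← finsum_set_coe_eq_finsum_mem, finsum_eq_sum_of_fintype]
  rfl

open Representation in
theorem exists_conj_eq_of_isConstituent [Finite L] {H K : Subgroup L} (hKH : K ≤ H)
    (hHK : H ≤ Subgroup.normalizer (K : Set L)) {χt χ χ₀ : L → ℂ}
    (hχt : IsIrrCharOf H χt) (hχ : IsIrrCharOf K χ) (hχ₀ : IsIrrCharOf K χ₀)
    (hc : IsConstituent K χt χ) (hc₀ : IsConstituent K χt χ₀) :
    ∃ x ∈ H, ∀ y, χ y = χ₀ (x * y * x⁻¹) := by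
  have := Fintype.ofFinite K
  have : Invertible (Nat.card K : ℂ) := invertibleOfNonzero (Nat.cast_ne_zero.2 Nat.card_pos.ne')
  obtain ⟨-, W, hW, hWχ⟩ := hχt
  obtain ⟨hχ0, X, hX, hXχ⟩ := hχ
  obtain ⟨hχ₀0, X₀, hX₀, hX₀χ⟩ := hχ₀
  have := FDRep.isIrreducible_ρ W
  have := FDRep.isIrreducible_ρ X
  have := FDRep.isIrreducible_ρ X₀
  let ρ : Representation ℂ K W := W.ρ.comp (Subgroup.inclusion hKH)
  have hρ : ∀ n : K, ρ.character n = χt n := fun n => (hWχ _).symm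
  change ∀ n : K, χ n = character X.ρ n at hXχ
  change ∀ n : K, χ₀ n = character X₀.ρ n at hX₀χ
  rw [isConstituent_iff_sum_ne_zero] at hc hc₀
  obtain ⟨f, hf⟩ := exists_intertwiningMap_ne_zero_of_sum_ne_zero (ρ := X₀.ρ) (σ := ρ) (by
    convert hc₀ using 2 with n
    rw [hρ, char_inv_eq_conj, hX₀χ])
  obtain ⟨g, hg⟩ := exists_intertwiningMap_ne_zero_of_sum_ne_zero (ρ := ρ) (σ := X.ρ) (by
    convert (map_ne_zero (starRingEnd ℂ)).2 hc using 1
    rw [map_sum]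
    refine Finset.sum_congr rfl fun n _ => ?_
    rw [char_inv_eq_conj ρ, hρ, hXχ, map_mul, Complex.conj_conj, mul_comm])
  obtain ⟨s, hs⟩ := exists_char_eq_char_conj hKH hHK hf hg
  refine ⟨s, s.2, fun y => ?_⟩
  by_cases hy : y ∈ K
  · rw [hXχ ⟨y, hy⟩, hs, ← hX₀χ, Subgroup.normalizerMonoidHom_apply_apply_coe]
  · rw [hχ0 y hy, hχ₀0 _ fun h => hy ((Subgroup.mem_normalizer_iff.1 (hHK s.2) y).2 h)]

theorem mem_charStab {M : Subgroup L} {θ : L → ℂ} {g : L} :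
    g ∈ charStab M θ ↔ g ∈ M ∧ ∀ y, θ (g * y * g⁻¹) = θ y :=
  Iff.rfl

theorem charStab_mono {M N : Subgroup L} (h : M ≤ N) (θ : L → ℂ) : charStab M θ ≤ charStab N θ :=
  fun _ hg => ⟨h hg.1, hg.2⟩

theorem conj_mem_charStab_iff {M : Subgroup L} {θ θ₀ : L → ℂ} {x g : L} (hx : x ∈ M)
    (hθ : ∀ y, θ y = θ₀ (x * y * x⁻¹)) :
    x * g * x⁻¹ ∈ charStab M θ₀ ↔ g ∈ charStab M θ := by
  have hconj : ∀ y, x * g * x⁻¹ * y * (x * g * x⁻¹)⁻¹ = x * (g * (x⁻¹ * y * x) * g⁻¹) * x⁻¹ := by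
    intro y
    group
  simp only [mem_charStab, hθ, hconj]
  refine and_congr ?_ ⟨fun h y => ?_, fun h y => ?_⟩
  · rw [M.mul_mem_cancel_right (M.inv_mem hx), M.mul_mem_cancel_left hx]
  · simpa [mul_assoc] using h (x * y * x⁻¹)
  · simpa [mul_assoc] using h (x⁻¹ * y * x)

theorem IsIrrCharOf.le_charStab {K M : Subgroup L} {θ : L → ℂ} (hθ : IsIrrCharOf K θ)
    (hKM : K ≤ M) : K ≤ charStab M θ := by
  obtain ⟨hθ0, X, -, hXθ⟩ := hθ
  refine fun k hk => ⟨hKM hk, fun y => ?_⟩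
  by_cases hy : y ∈ K
  · rw [hXθ ⟨y, hy⟩, show k * y * k⁻¹ = ((⟨k, hk⟩ * ⟨y, hy⟩ * (⟨k, hk⟩ : K)⁻¹ : K) : L) from rfl,
      hXθ, FDRep.char_conj]
  · rw [hθ0 y hy, hθ0]
    exact fun h => hy (by simpa [mul_assoc] using K.mul_mem (K.mul_mem (K.inv_mem hk) h) hk)

theorem IsVSplit.of_conj {H V K : Subgroup L} (hKH : K ≤ H)
    (htriv : ∀ h ∈ H, ∀ v ∈ V, h * v * h⁻¹ * v⁻¹ ∈ K) {θ θ₀ : L → ℂ} (hθ : IsIrrCharOf K θ)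
    {x : L} (hx : x ∈ H) (hconj : ∀ y, θ y = θ₀ (x * y * x⁻¹)) (h₀ : IsVSplit H V θ₀) :
    IsVSplit H V θ := by
  refine Set.Subset.antisymm (fun g hg => ?_) (Set.mul_subset_iff.2 fun a ha b hb =>
    mul_mem (charStab_mono le_sup_left θ ha) (charStab_mono le_sup_right θ hb))
  obtain ⟨a, ha, v, hv, hav⟩ : x * g * x⁻¹ ∈ (charStab H θ₀ : Set L) * charStab V θ₀ :=
    h₀ ▸ (conj_mem_charStab_iff (Subgroup.mem_sup_left hx) hconj).2 hg
  set h := x⁻¹ * a * x * (x⁻¹ * v * x * v⁻¹)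
  have hh : h ∈ charStab H θ := by
    refine mul_mem ((conj_mem_charStab_iff hx hconj).1 (by simpa [mul_assoc] using ha)) ?_
    exact hθ.le_charStab hKH (by simpa using htriv x⁻¹ (inv_mem hx) v hv.1)
  have hgh : g = h * v := by
    simp only at hav
    rw [show g = x⁻¹ * (x * g * x⁻¹) * x by group, ← hav]
    simp only [h]
    group
  refine ⟨h, hh, v, ⟨hv.1, ?_⟩, hgh.symm⟩
  have hv' : h⁻¹ * g ∈ charStab (H ⊔ V) θ := mul_mem (inv_mem (charStab_mono le_sup_left θ hh)) hg
  rw [hgh, inv_mul_cancel_left] at hv'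
  exact hv'.2

end Characters

theorem vSplit_of_exists_vSplit_general
    (L : Type) [Group L] [Finite L] (H V K : Subgroup L)
    (hKH : K ≤ H)
    (hKnormal : ∀ g ∈ H ⊔ V, ∀ k ∈ K, g * k * g⁻¹ ∈ K)
    (htriv : ∀ h ∈ H, ∀ v ∈ V, h * v * h⁻¹ * v⁻¹ ∈ K)
    (χt : L → ℂ) (hχt : IsIrrCharOf H χt)
    (hex : ∃ χ : L → ℂ, IsIrrCharOf K χ ∧ IsConstituent K χt χ ∧ IsVSplit H V χ) :
    ∀ χ : L → ℂ, IsIrrCharOf K χ → IsConstituent K χt χ → IsVSplit H V χ := by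
  intro χ hχ hc
  obtain ⟨χ₀, hχ₀, hc₀, h₀⟩ := hex
  have hHK : H ≤ Subgroup.normalizer (K : Set L) := fun g hg =>
    Subgroup.mem_normalizer_fintype (hKnormal g (Subgroup.mem_sup_left hg))
  obtain ⟨x, hx, hconj⟩ := exists_conj_eq_of_isConstituent hKH hHK hχt hχ hχ₀ hc hc₀
  exact h₀.of_conj hKH htriv hχ hx hconj

/-- Let `L` be a finite group, `H, V, K ≤ L` with `V` normalizing `H`, `K ≤ H` normal in
`HV = H ⊔ V`, and every element of `H ∩ V` acting on `K` by an inner automorphism of `K`.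
Assume moreover that `V` acts trivially on `H/K`, i.e. `[H, V] ⊆ K`.
Let `χ̃` be an irreducible character of `H`.  If some character in `Irr(K | χ̃)` is
`V`-split, then every character in `Irr(K | χ̃)` is `V`-split. -/
theorem vSplit_of_exists_vSplit
    (L : Type) [Group L] [Finite L] (H V K : Subgroup L)
    (hnorm : V ≤ Subgroup.normalizer (H : Set L))
    (hKH : K ≤ H)
    (hKnormal : ∀ g ∈ H ⊔ V, ∀ k ∈ K, g * k * g⁻¹ ∈ K)
    (hinner : ∀ x ∈ H ⊓ V, ∃ k ∈ K, ∀ y ∈ K, x * y * x⁻¹ = k * y * k⁻¹)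
    (htriv : ∀ h ∈ H, ∀ v ∈ V, h * v * h⁻¹ * v⁻¹ ∈ K)
    (χt : L → ℂ) (hχt : IsIrrCharOf H χt)
    (hex : ∃ χ : L → ℂ, IsIrrCharOf K χ ∧ IsConstituent K χt χ ∧ IsVSplit H V χ) :
    ∀ χ : L → ℂ, IsIrrCharOf K χ → IsConstituent K χt χ → IsVSplit H V χ :=
  vSplit_of_exists_vSplit_general L H V K hKH hKnormal htriv χt hχt hex
end

section
/- Let ξ ∈ F̄^× have odd order and let z ∈ F̄^× satisfy z^{q−η} = 1. Then for every integer α ≥ 0 the following are equivalent: (a) there exists an integer k ≥ 0 such that z·ξ = ξ^{(ηq)^k}; (b) there exists an integer m ≥ 0 such that z·ξ = ξ^{(ηq)^{2^α · m}}. (In the paper's language: for Γ ∈ ℱ whose roots have odd order, z.Γ = Γ if and only if z.Γ_{(α)} = Γ_{(α)} for every α ≥ 0.) -/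
/-!
Write `u = ηq`, so that `z ^ (u - 1) = 1`, and let `n` be the (odd) order of `ξ`.
If `z * ξ = ξ ^ (u ^ k)` then `z = ξ ^ (u ^ k - 1)`, hence
`n ∣ (u ^ k - 1) (u - 1) ∣ (u ^ k - 1) ^ 2`, so every prime factor of `n` divides `u ^ k - 1`.
Lifting the exponent then gives `(u ^ k) ^ n ≡ 1 [ZMOD n]`: the residue of `u ^ k` has odd
order modulo `n`, so it is a power of its own `2 ^ α`-th power, and `ξ ^ (u ^ k)` only depends
on that residue.
-/

theorem natCast_dvd_pow_sub_one_of_forall_prime_dvd {R : Type*} [CommRing R] {w : R} {n : ℕ}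
    (h : ∀ p : ℕ, p.Prime → p ∣ n → (p : R) ∣ w - 1) : (n : R) ∣ w ^ n - 1 := by
  induction n using Nat.recOnPosPrimePosCoprime with
  | zero => simp
  | one => simp
  | prime_pow p e hp he =>
    obtain ⟨e, rfl⟩ := Nat.exists_eq_add_one_of_ne_zero he.ne'
    have hpw : (p : R) ∣ w - 1 := h p hp (dvd_pow_self p e.succ_ne_zero)
    push_cast
    calc (p : R) ^ (e + 1) ∣ w ^ p ^ e - 1 := by simpa using dvd_sub_pow_of_dvd_sub hpw e
      _ ∣ w ^ p ^ (e + 1) - 1 := dvd_pow_sub_one_of_dvd (pow_dvd_pow p e.le_succ)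
  | coprime a b _ _ hab ha hb =>
    have ha' := ha fun p hp hpa => h p hp (hpa.mul_right b)
    have hb' := hb fun p hp hpb => h p hp (hpb.mul_left a)
    push_cast
    exact (Nat.Coprime.cast hab).mul_dvd (ha'.trans (dvd_pow_sub_one_of_dvd (dvd_mul_right a b)))
      (hb'.trans (dvd_pow_sub_one_of_dvd (dvd_mul_left b a)))

section OddOrder

variable {G : Type*} [CommGroup G] {ξ z : G} {u : ℤ} {k : ℕ}

theorem orderOf_dvd_pow_sub_one_sq (hz : z ^ (u - 1) = 1) (hk : z * ξ = ξ ^ (u ^ k)) :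
    (orderOf ξ : ℤ) ∣ (u ^ k - 1) ^ 2 := by
  have hzξ : z = ξ ^ (u ^ k - 1) := by
    rw [zpow_sub_one, eq_mul_inv_iff_mul_eq, hk]
  calc (orderOf ξ : ℤ) ∣ (u ^ k - 1) * (u - 1) := by
        rw [orderOf_dvd_iff_zpow_eq_one, zpow_mul, ← hzξ, hz]
    _ ∣ (u ^ k - 1) * (u ^ k - 1) :=
        mul_dvd_mul_left _ (by simpa using sub_one_dvd_pow_sub_one u k)
    _ = (u ^ k - 1) ^ 2 := (sq _).symm

theorem exists_eq_zpow_pow_two_pow_mul (hξ : Odd (orderOf ξ)) (hz : z ^ (u - 1) = 1)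
    (hk : z * ξ = ξ ^ (u ^ k)) (α : ℕ) : ∃ m : ℕ, z * ξ = ξ ^ (u ^ (2 ^ α * m)) := by
  set n := orderOf ξ
  have hrad : (n : ℤ) ∣ (u ^ k) ^ n - 1 :=
    natCast_dvd_pow_sub_one_of_forall_prime_dvd fun p hp hpn =>
      Int.Prime.dvd_pow' hp
        ((Int.natCast_dvd_natCast.2 hpn).trans (orderOf_dvd_pow_sub_one_sq hz hk))
  set y : ZMod n := (u : ZMod n) ^ k
  have hy : orderOf y ∣ n := by
    refine orderOf_dvd_of_pow_eq_one ?_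
    simpa [y, sub_eq_zero] using (ZMod.intCast_zmod_eq_zero_iff_dvd _ n).2 hrad
  obtain ⟨m, hm⟩ := exists_pow_eq_self_of_coprime (x := y)
    ((Nat.coprime_two_left.2 (hξ.of_dvd_nat hy)).pow_left α)
  refine ⟨k * m, ?_⟩
  rw [hk, zpow_eq_zpow_iff_modEq, ← ZMod.intCast_eq_intCast_iff]
  push_cast
  rw [show 2 ^ α * (k * m) = k * 2 ^ α * m by ring, pow_mul, pow_mul]
  exact hm.symm

end OddOrder

theorem odd_order_orbit_two_power_general
    (q : ℕ)
    (η : ℤ) (hη : η = 1 ∨ η = -1)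
    (F : Type) [Field F]
    (ξ z : Fˣ) (hξ : Odd (orderOf ξ)) (hz : z ^ ((q : ℤ) - η) = 1) :
    ∀ α : ℕ,
      ((∃ k : ℕ, z * ξ = ξ ^ ((η * (q : ℤ)) ^ k)) ↔
        (∃ m : ℕ, z * ξ = ξ ^ ((η * (q : ℤ)) ^ (2 ^ α * m)))) := by
  intro α
  have hzu : z ^ (η * q - 1) = 1 := by
    have : η * q - 1 = η * (q - η) := by rcases hη with rfl | rfl <;> ring
    rw [this, zpow_mul', hz, one_zpow]
  exact ⟨fun ⟨k, hk⟩ => exists_eq_zpow_pow_two_pow_mul hξ hzu hk α,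
    fun ⟨m, hm⟩ => ⟨2 ^ α * m, hm⟩⟩

theorem odd_order_orbit_two_power
    (q : ℕ) (hq : IsPrimePow q) (hqodd : Odd q)
    (η : ℤ) (hη : η = 1 ∨ η = -1)
    (K : Type) [Field K] [Fintype K] (hK : Fintype.card K = q)
    (F : Type) [Field F] [Algebra K F] [IsAlgClosure K F]
    (ξ z : Fˣ) (hξ : Odd (orderOf ξ)) (hz : z ^ ((q : ℤ) - η) = 1) :
    ∀ α : ℕ,
      ((∃ k : ℕ, z * ξ = ξ ^ ((η * (q : ℤ)) ^ k)) ↔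
        (∃ m : ℕ, z * ξ = ξ ^ ((η * (q : ℤ)) ^ (2 ^ α * m)))) :=
  odd_order_orbit_two_power_general q η hη F ξ z hξ hz
end

section
/- Let ξ ∈ F̄^× have odd order, let d be the least positive integer such that ξ^{(ηq)^d} = ξ, and suppose k ≥ 1 is an integer with ξ^{((ηq)^k − 1)(q − η)} = 1. Then the 2-part of d (that is, 2^{v₂(d)}, where v₂ is the 2-adic valuation) divides k. -/
/-!
Let `ξ ∈ F̄ˣ` have odd order, let `d` be the least positive integer with
`ξ^{(ηq)^d} = ξ`, and suppose `k ≥ 1` satisfies `ξ^{((ηq)^k − 1)(q − η)} = 1`.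
Then the 2-part of `d` divides `k`.
-/

theorem two_part_of_degree_dvd
    (q : ℕ) (hq : IsPrimePow q) (hqodd : Odd q)
    (η : ℤ) (hη : η = 1 ∨ η = -1)
    (K : Type) [Field K] [Fintype K] (hK : Fintype.card K = q)
    (F : Type) [Field F] [Algebra K F] [IsAlgClosure K F]
    (ξ : Fˣ) (hξ : Odd (orderOf ξ))
    (d : ℕ) (hd : 0 < d) (hdfix : ξ ^ ((η * (q : ℤ)) ^ d) = ξ)
    (hdmin : ∀ e : ℕ, 0 < e → ξ ^ ((η * (q : ℤ)) ^ e) = ξ → d ≤ e)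
    (k : ℕ) (hk : 1 ≤ k)
    (hkξ : ξ ^ (((η * (q : ℤ)) ^ k - 1) * ((q : ℤ) - η)) = 1) :
    2 ^ (d.factorization 2) ∣ k := by
  set n := orderOf ξ with hn
  have hη2 : η * η = 1 := by rcases hη with h | h <;> simp [h]
  -- translation between fixed-point statements and divisibility
  have hfix : ∀ z : ℤ, ξ ^ z = ξ ↔ (n : ℤ) ∣ z - 1 := by
    intro z
    rw [orderOf_dvd_iff_zpow_eq_one, zpow_sub, zpow_one, mul_inv_eq_one]
  set x : ℤ := η * (q : ℤ) with hx
  set A : ℤ := x ^ k with hA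
  have hdvd1 : (n : ℤ) ∣ x ^ d - 1 := (hfix _).mp hdfix
  have hkdvd : (n : ℤ) ∣ (A - 1) * ((q : ℤ) - η) :=
    orderOf_dvd_iff_zpow_eq_one.mpr hkξ
  -- n ∣ (A-1)^2
  have hgeom : (∑ i ∈ Finset.range k, x ^ i) * (x - 1) = A - 1 := geom_sum_mul x k
  have hsq : (n : ℤ) ∣ (A - 1) ^ 2 := by
    have key : (A - 1) ^ 2 = ((A - 1) * ((q : ℤ) - η)) * (η * ∑ i ∈ Finset.range k, x ^ i) := by
      linear_combination (-(A - 1)) * hgeom + (A - 1) * (∑ i ∈ Finset.range k, x ^ i) * hη2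
    rw [key]
    exact hkdvd.mul_right _
  -- n ∣ A^n - 1
  have hAn : (n : ℤ) ∣ A ^ n - 1 := by
    have hgeom2 : (∑ i ∈ Finset.range n, A ^ i) * (A - 1) = A ^ n - 1 := geom_sum_mul A n
    have hdiff : (A - 1) ∣ (∑ i ∈ Finset.range n, A ^ i) - n := by
      have h : (∑ i ∈ Finset.range n, A ^ i) - n = ∑ i ∈ Finset.range n, (A ^ i - 1) := by
        rw [Finset.sum_sub_distrib]
        simp
      rw [h]
      refine Finset.dvd_sum fun i _ => ?_
      simpa using sub_dvd_pow_sub_pow A 1 i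
    obtain ⟨m, hm⟩ := hdiff
    have h : A ^ n - 1 = (n : ℤ) * (A - 1) + (A - 1) ^ 2 * m := by
      rw [← hgeom2]
      linear_combination (A - 1) * hm
    rw [h]
    exact dvd_add (Dvd.intro _ rfl) (hsq.mul_right m)
  -- ξ ^ x ^ (k*n) = ξ
  have hfixkn : ξ ^ (x ^ (k * n)) = ξ := by
    rw [hfix, pow_mul]
    exact hAn
  -- d ∣ k * n by minimality
  have hddvd : d ∣ k * n := by
    set e := k * n with he
    have hr : e % d = 0 := by
      by_contra hr0
      have hrpos : 0 < e % d := Nat.pos_of_ne_zero hr0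
      have hrlt : e % d < d := Nat.mod_lt _ hd
      have hfixr : ξ ^ (x ^ (e % d)) = ξ := by
        rw [hfix]
        have h1 : (n : ℤ) ∣ x ^ e - 1 := (hfix _).mp hfixkn
        have h2 : (n : ℤ) ∣ x ^ (d * (e / d)) - 1 := by
          refine hdvd1.trans ?_
          rw [pow_mul]
          simpa using sub_dvd_pow_sub_pow (x ^ d) 1 (e / d)
        have h3 : (n : ℤ) ∣ x ^ e - x ^ (e % d) := by
          have hsplit : x ^ e = x ^ (e % d) * x ^ (d * (e / d)) := by
            rw [← pow_add, Nat.mod_add_div e d]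
          have := (h2.mul_left (x ^ (e % d)))
          rw [hsplit]
          simpa [mul_sub] using this
        have := dvd_sub h1 h3
        simpa using this
      exact absurd (hdmin _ hrpos hfixr) (Nat.not_le.mpr hrlt)
    exact Nat.dvd_of_mod_eq_zero hr
  -- finish: 2-part of d divides k since n odd
  have hord : 2 ^ (d.factorization 2) ∣ k * n := (Nat.ordProj_dvd d 2).trans hddvd
  have hcop : Nat.Coprime (2 ^ (d.factorization 2)) n := by
    apply Nat.Coprime.pow_left
    rw [Nat.prime_two.coprime_iff_not_dvd]
    exact fun h => (Nat.not_even_iff_odd.mpr hξ) (even_iff_two_dvd.mpr h)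
  exact (Nat.Coprime.dvd_of_dvd_mul_right hcop) hord
end

section
/- Let q be a prime power and let ℓ be an odd prime that does not divide q(q² − 1). Then the Sylow ℓ-subgroups of SL₄(𝔽_q) are cyclic. -/
/-!
Since `ℓ ∤ q(q² − 1)`, the `ℓ`-part of `|GL₄(𝔽_q)| = q⁶(q − 1)(q² − 1)(q³ − 1)(q⁴ − 1)` lies
entirely in `q³ − 1` or entirely in `q⁴ − 1`, because `gcd(q³ − 1, q⁴ − 1) = q − 1`. Say it lies
in `q^d − 1`. The cyclic group `𝔽_{q^d}ˣ` then contains an element `g` whose order is the full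
`ℓ`-part of `|SL₄(𝔽_q)|`; its norm to `𝔽_q` is `1` as `ℓ ∤ q − 1`, so multiplication by `g` on
`𝔽_{q^d} ≅ 𝔽_q^d`, extended by the identity on `𝔽_q^(4 − d)`, is an element of `SL₄(𝔽_q)` of
the same order. It generates a cyclic Sylow `ℓ`-subgroup, and all Sylow `ℓ`-subgroups are
conjugate.
-/

open Matrix

theorem IsCyclic.exists_orderOf_eq_of_dvd_natCard {G : Type*} [Group G] [IsCyclic G] [Finite G]
    {m : ℕ} (hm : m ∣ Nat.card G) : ∃ g : G, orderOf g = m := by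
  obtain ⟨g, hg⟩ := IsCyclic.exists_ofOrder_eq_natCard (α := G)
  exact ⟨g ^ (orderOf g / m), orderOf_pow_orderOf_div (hg ▸ Nat.card_pos.ne') (hg ▸ hm)⟩

theorem Sylow.isCyclic_of_orderOf_eq {G : Type*} [Group G] [Finite G] {p : ℕ} [Fact p.Prime]
    {g : G} (hg : orderOf g = p ^ (Nat.card G).factorization p) (P : Sylow p G) : IsCyclic P := by
  let Q : Sylow p G := Sylow.ofCard (Subgroup.zpowers g) (by rw [Nat.card_zpowers, hg])
  have : IsCyclic Q := Subgroup.isCyclic_zpowers g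
  exact isCyclic_of_surjective _ (Q.equiv P).surjective

namespace Algebra

theorem norm_eq_one_of_pow_eq_one {F K : Type*} [Field F] [Finite F] [CommRing K] [Algebra F K]
    {x : Kˣ} {m : ℕ} (hx : x ^ m = 1) (hm : m.Coprime (Nat.card F - 1)) : norm F (x : K) = 1 := by
  have hm' : (Nat.card Fˣ).Coprime m := by rwa [Nat.card_units, Nat.coprime_comm]
  have : Units.map (norm F : K →* F) x = 1 :=
    hm'.pow_left_bijective.injective (by rw [← map_pow, hx, map_one, one_pow])
  exact congrArg Units.val this

variable {F K ι κ n : Type*} [CommRing F] [CommRing K] [Algebra F K]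
  [Fintype ι] [DecidableEq ι] [Fintype κ] [DecidableEq κ] [Fintype n] [DecidableEq n]

noncomputable def leftMulMatrixPadded (b : Module.Basis ι F K) (e : ι ⊕ κ ≃ n) :
    K →* Matrix n n F where
  toFun y := reindex e e (fromBlocks (leftMulMatrix b y) 0 0 1)
  map_one' := by simp
  map_mul' y z := by simp [fromBlocks_multiply]

variable (b : Module.Basis ι F K) (e : ι ⊕ κ ≃ n)

theorem leftMulMatrixPadded_injective : Function.Injective (leftMulMatrixPadded b e) := by
  intro y z h
  apply leftMulMatrix_injective b
  simpa [leftMulMatrixPadded] using congrArg toBlocks₁₁ ((reindex e e).injective h)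

theorem det_leftMulMatrixPadded (y : K) : (leftMulMatrixPadded b e y).det = norm F y := by
  simp [leftMulMatrixPadded, norm_eq_matrix_det b]

end Algebra

theorem Matrix.SpecialLinearGroup.exists_orderOf_eq_of_dvd_card_pow_sub_one
    {F : Type*} [Field F] [Finite F] {n d m : ℕ} (hd : d ≠ 0) (hdn : d ≤ n)
    (hm : m ∣ Nat.card F ^ d - 1) (hcop : m.Coprime (Nat.card F - 1)) :
    ∃ M : SpecialLinearGroup (Fin n) F, orderOf M = m := by
  have : Fact (ringChar F).Prime := ⟨CharP.prime_ringChar F⟩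
  have : NeZero d := ⟨hd⟩
  let K := FiniteField.Extension F (ringChar F) d
  obtain ⟨g, hg⟩ := IsCyclic.exists_orderOf_eq_of_dvd_natCard (G := Kˣ) (m := m)
    (by rwa [Nat.card_units, FiniteField.natCard_extension])
  have hnorm := Algebra.norm_eq_one_of_pow_eq_one (F := F) (hg ▸ pow_orderOf_eq_one g) hcop
  let b := (Module.finBasis F K).reindex (finCongr (FiniteField.finrank_extension F _ d))
  let Φ := Algebra.leftMulMatrixPadded b
    (finSumFinEquiv.trans (finCongr (Nat.add_sub_cancel' hdn)))
  refine ⟨⟨Φ g, by rw [Algebra.det_leftMulMatrixPadded]; exact hnorm⟩, ?_⟩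
  rw [← hg, ← orderOf_units, ← orderOf_injective Φ (Algebra.leftMulMatrixPadded_injective ..)]
  exact (orderOf_injective (SpecialLinearGroup.coeMonoidHom (ι := Fin n) (R := F))
    SpecialLinearGroup.coeMonoidHom_injective _).symm

theorem Matrix.card_GL_fin_four (F : Type*) [Field F] [Fintype F] :
    Nat.card (GL (Fin 4) F) =
      Fintype.card F ^ 6 * ((Fintype.card F - 1) * (Fintype.card F ^ 2 - 1)) *
        ((Fintype.card F ^ 3 - 1) * (Fintype.card F ^ 4 - 1)) := by
  rw [card_GL_field, Fin.prod_univ_four]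
  set q := Fintype.card F
  have hfactor {i : ℕ} (hi : i ≤ 4) : q ^ 4 - q ^ i = q ^ i * (q ^ (4 - i) - 1) := by
    rw [Nat.mul_sub_one, ← pow_add, Nat.add_sub_cancel' hi]
  simp only [Fin.val_zero, Fin.val_one, Fin.val_two, show ((3 : Fin 4) : ℕ) = 3 from rfl,
    hfactor (show 0 ≤ 4 by norm_num), hfactor (show 1 ≤ 4 by norm_num),
    hfactor (show 2 ≤ 4 by norm_num), hfactor (show 3 ≤ 4 by norm_num)]
  norm_num
  ring

theorem Nat.Prime.exists_pow_dvd_pow_sub_one {ℓ q v : ℕ} (hℓ : ℓ.Prime)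
    (hℓq : ¬ ℓ ∣ q * (q ^ 2 - 1))
    (h : ℓ ^ v ∣ q ^ 6 * ((q - 1) * (q ^ 2 - 1)) * ((q ^ 3 - 1) * (q ^ 4 - 1))) :
    ∃ d ∈ Set.Icc 3 4, ℓ ^ v ∣ q ^ d - 1 := by
  obtain ⟨cq, cq2⟩ := Nat.coprime_mul_iff_right.1 (hℓ.coprime_iff_not_dvd.2 hℓq)
  have cq1 : ℓ.Coprime (q - 1) :=
    cq2.coprime_dvd_right (by simpa using Nat.sub_one_dvd_pow_sub_one q 2)
  have h' : ℓ ^ v ∣ (q ^ 3 - 1) * (q ^ 4 - 1) :=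
    (((cq.pow_right 6).mul_right (cq1.mul_right cq2)).pow_left v).dvd_of_dvd_mul_left h
  by_cases h3 : ℓ ∣ q ^ 3 - 1
  · have h4 : ¬ ℓ ∣ q ^ 4 - 1 := fun h4 =>
      hℓ.coprime_iff_not_dvd.1 cq1 (by simpa using Nat.dvd_gcd h3 h4)
    exact ⟨3, by simp, hℓ.prime.pow_dvd_of_dvd_mul_right v h4 h'⟩
  · exact ⟨4, by simp, hℓ.prime.pow_dvd_of_dvd_mul_left v h3 h'⟩

theorem sylow_cyclic_SL4_general
    (q ℓ : ℕ) (hℓ : ℓ.Prime)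
    (hdvd : ¬ ℓ ∣ q * (q ^ 2 - 1))
    (F : Type) [Field F] [Fintype F] (hF : Fintype.card F = q)
    (P : Sylow ℓ (Matrix.SpecialLinearGroup (Fin 4) F)) :
    IsCyclic ↥(P : Subgroup (Matrix.SpecialLinearGroup (Fin 4) F)) := by
  have : Fact ℓ.Prime := ⟨hℓ⟩
  set v := (Nat.card (SpecialLinearGroup (Fin 4) F)).factorization ℓ
  have hv : ℓ ^ v ∣ Nat.card (GL (Fin 4) F) :=
    (Nat.ordProj_dvd _ _).trans
      (Subgroup.card_dvd_of_injective _ SpecialLinearGroup.toGL_injective)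
  rw [card_GL_fin_four, hF] at hv
  obtain ⟨d, ⟨hd3, hd4⟩, hd⟩ := hℓ.exists_pow_dvd_pow_sub_one hdvd hv
  have hcop : (ℓ ^ v).Coprime (Nat.card F - 1) := by
    refine Nat.Coprime.pow_left v (hℓ.coprime_iff_not_dvd.2 fun h => hdvd ?_)
    rw [Nat.card_eq_fintype_card, hF] at h
    exact dvd_mul_of_dvd_right (h.trans (Nat.sub_one_dvd_pow_sub_one q 2)) q
  obtain ⟨M, hM⟩ := SpecialLinearGroup.exists_orderOf_eq_of_dvd_card_pow_sub_one (n := 4)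
    (by omega) hd4 (by rwa [Nat.card_eq_fintype_card, hF]) hcop
  exact Sylow.isCyclic_of_orderOf_eq hM P

theorem sylow_cyclic_SL4
    (q ℓ : ℕ) (hq : IsPrimePow q) (hℓ : ℓ.Prime) (hodd : Odd ℓ)
    (hdvd : ¬ ℓ ∣ q * (q ^ 2 - 1))
    (F : Type) [Field F] [Fintype F] [DecidableEq F] (hF : Fintype.card F = q)
    (P : Sylow ℓ (Matrix.SpecialLinearGroup (Fin 4) F)) :
    IsCyclic ↥(P : Subgroup (Matrix.SpecialLinearGroup (Fin 4) F)) :=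
  sylow_cyclic_SL4_general q ℓ hℓ hdvd F hF P
end

section
/- Let q be a prime power and let ℓ be an odd prime that does not divide q(q² − 1). Then the Sylow ℓ-subgroups of SU₄(q) are cyclic. -/
/-- The special unitary group `SU_n` over a field `K` with a ring involution `star`,
realized as the subgroup of the special linear group `SL_n(K)` consisting of those `A`
with `(star A)ᵀ * A = 1`, i.e. whose matrix lies in the unitary group of `K`. -/
def specialUnitarySubgroup (n : ℕ) (K : Type) [Field K] [StarRing K] :
    Subgroup (Matrix.SpecialLinearGroup (Fin n) K) where
  carrier := {A | (A : Matrix (Fin n) (Fin n) K) ∈ unitary (Matrix (Fin n) (Fin n) K)}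
  one_mem' := by
    simp only [Set.mem_setOf_eq, Matrix.SpecialLinearGroup.coe_one]
    exact one_mem (unitary (Matrix (Fin n) (Fin n) K))
  mul_mem' := by
    intro a b ha hb
    simp only [Set.mem_setOf_eq, Matrix.SpecialLinearGroup.coe_mul] at *
    exact mul_mem ha hb
  inv_mem' := by
    intro a ha
    simp only [Set.mem_setOf_eq] at *
    have h1 : (a : Matrix (Fin n) (Fin n) K)
        * ((a⁻¹ : Matrix.SpecialLinearGroup (Fin n) K) : Matrix (Fin n) (Fin n) K) = 1 := by
      rw [← Matrix.SpecialLinearGroup.coe_mul, mul_inv_cancel,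
        Matrix.SpecialLinearGroup.coe_one]
    have h2 : star (a : Matrix (Fin n) (Fin n) K) * (a : Matrix (Fin n) (Fin n) K) = 1 :=
      (Unitary.mem_iff.mp ha).1
    have h3 : ((a⁻¹ : Matrix.SpecialLinearGroup (Fin n) K) : Matrix (Fin n) (Fin n) K)
        = star (a : Matrix (Fin n) (Fin n) K) := (left_inv_eq_right_inv h2 h1).symm
    rw [h3]
    exact Unitary.star_mem ha

/-!
Over an algebraic closure `L` of `K`, the Sylow subgroup `P` acts faithfully on `L⁴` by matrices
preserving the form `(u, v) ↦ ∑ uᵢ^q vᵢ`, and each of its elements is semisimple because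
`ℓ ≠ char K`.

`P` is abelian: otherwise a nilpotent group supplies `a, b` whose commutator `c ≠ 1` is central,
and on a common eigenvector of `a` and `c` (with `c`-eigenvalue `γ ≠ 1`) the powers of `b` produce
eigenvectors of `a` with eigenvalues `β, βγ, …, βγ⁴`. As `γ` has order at least `ℓ ≥ 5`, these
are five distinct eigenvalues in dimension `4`.

So `L⁴` splits into weight spaces of at most four characters `χ : P → Lˣ`. The invariant form pairs
the `χ`-weight space with the `χ^(-q)`-weight space, and as `ℓ ∤ q(q² - 1)` every nontrivial
character has an orbit of size at least three under `χ ↦ χ^(-q)`. Two weights with different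
kernels would therefore give six weights, so all nontrivial weights have the same kernel, which
faithfulness forces to be trivial: `P` embeds into `Lˣ` and is cyclic.
-/

open Module Module.End Matrix
open scoped commutatorElement

theorem Group.exists_commutatorElement_mem_center_ne_one {G : Type*} [Group G] [Group.IsNilpotent G]
    (h : ∃ a b : G, ¬Commute a b) : ∃ a b : G, ⁅a, b⁆ ∈ Subgroup.center G ∧ ⁅a, b⁆ ≠ 1 := by
  by_contra! H
  have hle (m : ℕ) : Subgroup.upperCentralSeries G m ≤ Subgroup.center G := by
    induction m with
    | zero => simp
    | succ m ih =>
      refine fun x hx ↦ Subgroup.mem_center_iff.mpr fun y ↦ ?_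
      exact (commutatorElement_eq_one_iff_mul_comm.mp
        (H x y (ih (Subgroup.mem_upperCentralSeries_succ_iff.mp hx y)))).symm
  obtain ⟨n, hn⟩ := Group.IsNilpotent.nilpotent' (G := G)
  obtain ⟨a, b, hab⟩ := h
  exact hab (Subgroup.mem_center_iff.mp (hle n (hn ▸ Subgroup.mem_top a)) b).symm

namespace Module.End

section JointEigenspace

variable {ι K V : Type*} [Field K] [AddCommGroup V] [Module K V]

theorem isSemisimple_of_pow_eq_one {f : End K V} {n : ℕ} (hn : (n : K) ≠ 0) (hf : f ^ n = 1) :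
    f.IsSemisimple :=
  isSemisimple_of_squarefree_aeval_eq_zero
    (Polynomial.separable_X_pow_sub_C 1 hn one_ne_zero).squarefree (by simp [hf])

theorem pow_eq_one_of_hasEigenvector {f : End K V} {n : ℕ} (hf : f ^ n = 1) {μ : K} {v : V}
    (hv : f.HasEigenvector μ v) : μ ^ n = 1 :=
  smul_left_injective K hv.2 (by simpa [hf] using (hv.pow_apply n).symm)

def jointEigenspace (f : ι → End K V) (χ : ι → K) : Submodule K V :=
  ⨅ i, (f i).eigenspace (χ i)

variable {f : ι → End K V}

theorem mem_jointEigenspace_iff {χ : ι → K} {v : V} :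
    v ∈ jointEigenspace f χ ↔ ∀ i, f i v = χ i • v := by
  simp [jointEigenspace, Submodule.mem_iInf]

theorem iSupIndep_jointEigenspace (hf : ∀ i j, Commute (f i) (f j)) :
    iSupIndep (jointEigenspace f) :=
  (independent_iInf_maxGenEigenspace_of_forall_mapsTo f
    fun i j μ ↦ mapsTo_maxGenEigenspace_of_comm (hf j i) μ).mono
    fun _ ↦ iInf_mono fun _ ↦ eigenspace_le_maxGenEigenspace

theorem iSup_jointEigenspace_eq_top [IsAlgClosed K] [FiniteDimensional K V]
    (hf : ∀ i j, Commute (f i) (f j)) (hs : ∀ i, (f i).IsSemisimple) :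
    ⨆ χ, jointEigenspace f χ = ⊤ := by
  simpa only [jointEigenspace, (hs _).isFinitelySemisimple.maxGenEigenspace_eq_eigenspace] using
    iSup_iInf_maxGenEigenspace_eq_top_of_iSup_maxGenEigenspace_eq_top_of_commute f
      (fun i j _ ↦ hf i j) fun i ↦ iSup_maxGenEigenspace_eq_top (f i)

theorem exists_jointEigenspace_ne_bot_of_ne_one (htop : ⨆ χ, jointEigenspace f χ = ⊤) {i : ι}
    (hi : f i ≠ 1) : ∃ χ, jointEigenspace f χ ≠ ⊥ ∧ χ i ≠ 1 := by
  by_contra! h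
  refine hi (LinearMap.ext fun v ↦ ?_)
  have hv : v ∈ (f i).eigenspace 1 := by
    refine (htop ▸ iSup_le fun χ ↦ ?_ : ⊤ ≤ (f i).eigenspace 1) Submodule.mem_top
    rcases eq_or_ne (jointEigenspace f χ) ⊥ with hχ | hχ
    · simp [hχ]
    · exact h χ hχ ▸ iInf_le _ i
  simpa using mem_eigenspace_iff.mp hv

theorem finite_setOf_jointEigenspace_ne_bot [FiniteDimensional K V]
    (hf : ∀ i j, Commute (f i) (f j)) : {χ | jointEigenspace f χ ≠ ⊥}.Finite :=
  Submodule.finite_ne_bot_of_iSupIndep (iSupIndep_jointEigenspace hf)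

theorem ncard_setOf_jointEigenspace_ne_bot_le [FiniteDimensional K V]
    (hf : ∀ i j, Commute (f i) (f j)) : {χ | jointEigenspace f χ ≠ ⊥}.ncard ≤ finrank K V := by
  have hI := iSupIndep_jointEigenspace hf
  let := hI.fintypeNeBotOfFiniteDimensional
  rw [← Nat.card_coe_set_eq]
  exact (Nat.card_eq_fintype_card (α := {χ // jointEigenspace f χ ≠ ⊥})).trans_le
    hI.subtype_ne_bot_le_finrank

end JointEigenspace

section CommutatorEigenvalues

variable {K V : Type*} [Field K] [AddCommGroup V] [Module K V] [FiniteDimensional K V]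

/-- The powers of `A` move a common eigenvector of `B` and `C` through eigenvectors of `B` with
eigenvalues `β, βγ, βγ², …`, of which at most `finrank K V` are distinct. -/
theorem exists_pow_eq_one_of_mul_eq_mul_mul {A B C : End K V} (hA : Function.Injective A)
    (hB : Function.Injective B) (hAC : Commute A C) (hBA : B * A = C * A * B) {v : V}
    {β γ : K} (hBv : B.HasEigenvector β v) (hCv : C.HasEigenvector γ v) :
    ∃ i ∈ Finset.Icc 1 (finrank K V), γ ^ i = 1 := by
  by_contra! hγ
  have hCA (t : ℕ) : C ((A ^ t) v) = γ • (A ^ t) v := by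
    rw [← mul_apply, ← (hAC.pow_left t).eq, mul_apply, hCv.apply_eq_smul, map_smul]
  have hAv (t : ℕ) : B.HasEigenvector (β * γ ^ t) ((A ^ t) v) := by
    refine ⟨mem_eigenspace_iff.mpr ?_, fun h ↦ hBv.2 ((hA.iterate t) ?_)⟩
    · induction t with
      | zero => simpa using hBv.apply_eq_smul
      | succ t ih =>
        have : B ((A ^ (t + 1)) v) = C (A (B ((A ^ t) v))) := by
          rw [pow_succ', mul_apply, ← mul_apply B, hBA]; rfl
        rw [this, ih, map_smul, map_smul, ← mul_apply A, ← pow_succ', hCA, smul_smul, mul_assoc,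
          ← pow_succ]
    · rw [← pow_apply, h, Function.iterate_fixed (map_zero A)]
  have hβγ (t : ℕ) : β * γ ^ t ≠ 0 := fun h ↦ (hAv t).2 (hB (by simp [(hAv t).apply_eq_smul, h]))
  have hne {s t : ℕ} (hst : s < t) (ht : t ≤ finrank K V) : β * γ ^ s ≠ β * γ ^ t := fun h ↦
    hγ (t - s) (Finset.mem_Icc.mpr ⟨by omega, ht.trans' (Nat.sub_le t s)⟩)
      (mul_left_cancel₀ (hβγ s) (by
        rw [mul_one, mul_assoc, ← pow_add, Nat.add_sub_cancel' hst.le, h]))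
  have hinj : Function.Injective fun t : Fin (finrank K V + 1) ↦ β * γ ^ (t : ℕ) := by
    intro s t h
    by_contra hst
    rcases Fin.lt_or_lt_of_ne hst with hlt | hlt
    exacts [hne hlt (Nat.lt_succ_iff.mp t.2) h, hne hlt (Nat.lt_succ_iff.mp s.2) h.symm]
  have := (eigenvectors_linearIndependent' B _ hinj _ fun t ↦ hAv t).fintype_card_le_finrank
  simp at this

end CommutatorEigenvalues

section Representation

variable {G K V : Type*} [Group G] [Field K] [AddCommGroup V] [Module K V]

theorem isSemisimple_apply_of_natCard_ne_zero [Finite G] (ρ : G →* End K V)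
    (hK : (Nat.card G : K) ≠ 0) (g : G) : (ρ g).IsSemisimple :=
  isSemisimple_of_pow_eq_one hK (by rw [← map_pow, pow_card_eq_one', map_one])

def weightHom (ρ : G →* End K V) (χ : G → K) (hχ : jointEigenspace ρ χ ≠ ⊥) : G →* K where
  toFun := χ
  map_one' := by
    obtain ⟨v, hv, hv0⟩ := (Submodule.ne_bot_iff _).mp hχ
    exact smul_left_injective K hv0 (by simpa using (mem_jointEigenspace_iff.mp hv 1).symm)
  map_mul' g h := by
    obtain ⟨v, hv, hv0⟩ := (Submodule.ne_bot_iff _).mp hχ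
    have hv := mem_jointEigenspace_iff.mp hv
    refine smul_left_injective K hv0 (show χ (g * h) • v = (χ g * χ h) • v from ?_)
    rw [← hv (g * h), map_mul, mul_apply, hv h, map_smul, hv g, smul_smul, mul_comm]

theorem commute_of_injective_of_coprime_finrank [Finite G] [Group.IsNilpotent G] [IsAlgClosed K]
    [FiniteDimensional K V] (ρ : G →* End K V) (hρ : Function.Injective ρ)
    (hK : (Nat.card G : K) ≠ 0) (hG : ∀ i ∈ Finset.Icc 1 (finrank K V), (Nat.card G).Coprime i)
    (a b : G) : Commute a b := by
  by_contra hab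
  obtain ⟨a, b, hc, hc1⟩ := Group.exists_commutatorElement_mem_center_ne_one ⟨a, b, hab⟩
  have hinj (g : G) : Function.Injective (ρ g) := fun x y h ↦ by
    simpa [← mul_apply, ← map_mul] using congrArg (ρ g⁻¹) h
  have hcomm (g : G) : Commute (ρ g) (ρ ⁅a, b⁆) :=
    Commute.map (Subgroup.mem_center_iff.mp hc g) ρ
  let f : Fin 2 → End K V := ![ρ a, ρ ⁅a, b⁆]
  have hf : ∀ i j, Commute (f i) (f j) := by
    intro i j
    fin_cases i <;> fin_cases j <;> simp [f, hcomm a, (hcomm a).symm]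
  obtain ⟨χ, hχ, hχ1⟩ := exists_jointEigenspace_ne_bot_of_ne_one
    (iSup_jointEigenspace_eq_top hf fun i ↦ by
      fin_cases i <;> exact isSemisimple_apply_of_natCard_ne_zero ρ hK _)
    (i := 1) (by simpa [f] using hρ.ne hc1)
  obtain ⟨v, hv, hv0⟩ := (Submodule.ne_bot_iff _).mp hχ
  have hvf (i) : (f i).HasEigenvector (χ i) v :=
    ⟨mem_eigenspace_iff.mpr (mem_jointEigenspace_iff.mp hv i), hv0⟩
  obtain ⟨i, hi, hγ⟩ := exists_pow_eq_one_of_mul_eq_mul_mul (hinj b) (hinj a) (hcomm b)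
    (by rw [← map_mul, ← map_mul, ← map_mul, commutatorElement_def]; group) (hvf 0) (hvf 1)
  have hγN := pow_eq_one_of_hasEigenvector
    (by rw [← map_pow, pow_card_eq_one', map_one] : ρ ⁅a, b⁆ ^ Nat.card G = 1) (hvf 1)
  exact hχ1 ((pow_eq_one_iff_of_coprime (hG i hi)).mp ⟨hγN, hγ⟩)

end Representation

end Module.End

section FrobeniusOrbit

variable {L : Type*} [Field L] {q N : ℕ} {a : L}

theorem inv_pow_eq_one_iff_of_coprime (hN : N.Coprime q) (ha : a ^ N = 1) :
    (a ^ q)⁻¹ = 1 ↔ a = 1 := by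
  rw [inv_eq_one]
  exact ⟨fun h ↦ (pow_eq_one_iff_of_coprime hN).mp ⟨ha, h⟩, fun h ↦ by rw [h, one_pow]⟩

theorem inv_pow_orbit_ne_of_coprime (hN0 : N ≠ 0) (hN : N.Coprime (q * (q ^ 2 - 1)))
    (ha : a ^ N = 1) (ha1 : a ≠ 1) :
    (a ^ q)⁻¹ ≠ a ∧ ((a ^ q)⁻¹ ^ q)⁻¹ ≠ a ∧ ((a ^ q)⁻¹ ^ q)⁻¹ ≠ (a ^ q)⁻¹ := by
  have hNq : N.Coprime q := Nat.Coprime.coprime_mul_right_right hN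
  have hNq2 : N.Coprime (q ^ 2 - 1) := Nat.Coprime.coprime_mul_left_right hN
  have hNq1 : N.Coprime (q + 1) :=
    hNq2.coprime_dvd_right ⟨q - 1, by rw [← Nat.sq_sub_sq, one_pow]⟩
  have hne {b : L} (hb : b ^ N = 1) (hb1 : b ≠ 1) : (b ^ q)⁻¹ ≠ b := fun h ↦ by
    have hb0 : b ≠ 0 := by rintro rfl; simp [zero_pow hN0] at hb
    have := mul_inv_cancel₀ (pow_ne_zero q hb0)
    rw [h, ← pow_succ] at this
    exact hb1 ((pow_eq_one_iff_of_coprime hNq1).mp ⟨hb, this⟩)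
  have hb : (a ^ q)⁻¹ ^ N = 1 := by rw [inv_pow, pow_right_comm, ha, one_pow, inv_one]
  refine ⟨hne ha ha1, fun h ↦ ha1 ?_, hne hb ((inv_pow_eq_one_iff_of_coprime hNq ha).not.mpr ha1)⟩
  rw [inv_pow, inv_inv, ← pow_mul, ← sq] at h
  rcases eq_or_ne q 0 with rfl | hq
  · simpa [eq_comm] using h
  have ha0 : a ≠ 0 := by rintro rfl; simp [zero_pow hN0] at ha
  have : a ^ (q ^ 2 - 1) = 1 :=
    mul_right_cancel₀ ha0 (by rw [pow_sub_one_mul (pow_ne_zero 2 hq), h, one_mul])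
  exact (pow_eq_one_iff_of_coprime hNq2).mp ⟨ha, this⟩

end FrobeniusOrbit

theorem six_le_ncard_of_inv_pow_mem {G L : Type*} [Field L] {q N : ℕ} (hN0 : N ≠ 0)
    (hN : N.Coprime (q * (q ^ 2 - 1))) {W : Set (G → L)} (hW : W.Finite)
    (hval : ∀ χ ∈ W, ∀ g, χ g ^ N = 1) (hσ : ∀ χ ∈ W, (fun g ↦ (χ g ^ q)⁻¹) ∈ W)
    {χ ψ : G → L} (hχ : χ ∈ W) (hψ : ψ ∈ W) {g h : G} (hχg : χ g = 1) (hχh : χ h ≠ 1)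
    (hψg : ψ g ≠ 1) : 6 ≤ W.ncard := by
  set σ : (G → L) → (G → L) := fun χ g ↦ (χ g ^ q)⁻¹
  have horbit (S : Set (G → L)) (hS : S ⊆ W) (hσS : ∀ θ ∈ S, σ θ ∈ S) {θ : G → L} (hθ : θ ∈ S)
      (x : G) (hx : θ x ≠ 1) : 2 < S.ncard := by
    obtain ⟨h1, h2, h3⟩ := inv_pow_orbit_ne_of_coprime hN0 hN (hval θ (hS hθ) x) hx
    refine (Set.two_lt_ncard_iff (hW.subset hS)).mpr
      ⟨θ, σ θ, σ (σ θ), hθ, hσS θ hθ, hσS _ (hσS θ hθ), fun e ↦ h1 (congrFun e x).symm,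
        fun e ↦ h2 (congrFun e x).symm, fun e ↦ h3 (congrFun e x).symm⟩
  have hσg (θ) (hθ : θ ∈ W) : σ θ g = 1 ↔ θ g = 1 :=
    inv_pow_eq_one_iff_of_coprime (Nat.Coprime.coprime_mul_right_right hN) (hval θ hθ g)
  have h1 := horbit (W ∩ {θ | θ g = 1}) Set.inter_subset_left
    (fun θ hθ ↦ ⟨hσ θ hθ.1, (hσg θ hθ.1).mpr hθ.2⟩) ⟨hχ, hχg⟩ h hχh
  have h2 := horbit (W \ {θ | θ g = 1}) Set.sdiff_subset
    (fun θ hθ ↦ ⟨hσ θ hθ.1, (hσg θ hθ.1).not.mpr hθ.2⟩) ⟨hψ, hψg⟩ g hψg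
  have := Set.ncard_inter_add_ncard_sdiff_eq_ncard W {θ | θ g = 1} hW
  omega

section Unitary

variable {n L : Type*} [Fintype n] [DecidableEq n] [Field L] (φ : L →+* L)

theorem dotProduct_comp_mulVec_of_unitary {M : Matrix n n L} (hM : (M.map φ)ᵀ * M = 1)
    (u v : n → L) : (φ ∘ (M *ᵥ u)) ⬝ᵥ (M *ᵥ v) = (φ ∘ u) ⬝ᵥ v := by
  have : φ ∘ (M *ᵥ u) = M.map φ *ᵥ (φ ∘ u) := funext (RingHom.map_mulVec φ M u)
  rw [this, ← vecMul_transpose, dotProduct_mulVec, vecMul_vecMul, hM, vecMul_one]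

/-- The form `(u, v) ↦ (φ ∘ u) ⬝ᵥ v` is preserved by the `M i` and is nondegenerate, so it pairs
the weight space of `χ` nontrivially with that of `(φ ∘ χ)⁻¹`. -/
theorem jointEigenspace_inv_ne_bot {ι : Type*} {M : ι → Matrix n n L}
    (hM : ∀ i, ((M i).map φ)ᵀ * M i = 1)
    (htop : ⨆ χ, jointEigenspace (fun i ↦ toLin' (M i)) χ = ⊤) {χ : ι → L}
    (hχ : jointEigenspace (fun i ↦ toLin' (M i)) χ ≠ ⊥) :
    jointEigenspace (fun i ↦ toLin' (M i)) (fun i ↦ (φ (χ i))⁻¹) ≠ ⊥ := by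
  obtain ⟨u, hu, hu0⟩ := (Submodule.ne_bot_iff _).mp hχ
  obtain ⟨ψ, v, hv, huv⟩ :
      ∃ ψ, ∃ v ∈ jointEigenspace (fun i ↦ toLin' (M i)) ψ, (φ ∘ u) ⬝ᵥ v ≠ 0 := by
    by_contra! h
    obtain ⟨j, hj⟩ := Function.ne_iff.mp hu0
    have : (φ ∘ u) ⬝ᵥ Pi.single j 1 = 0 :=
      Submodule.iSup_induction _ (motive := fun w ↦ (φ ∘ u) ⬝ᵥ w = 0) (htop ▸ Submodule.mem_top)
        h (dotProduct_zero _) fun x y hx hy ↦ by rw [dotProduct_add, hx, hy, add_zero]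
    exact hj (by simpa using this)
  have hψ : ψ = fun i ↦ (φ (χ i))⁻¹ := by
    funext i
    have := dotProduct_comp_mulVec_of_unitary φ (hM i) u v
    rw [← toLin'_apply, ← toLin'_apply, mem_jointEigenspace_iff.mp hu i,
      mem_jointEigenspace_iff.mp hv i, show φ ∘ (χ i • u) = φ (χ i) • (φ ∘ u) by ext; simp,
      smul_dotProduct, dotProduct_smul, smul_smul, smul_eq_mul] at this
    exact eq_inv_of_mul_eq_one_right ((mul_eq_right₀ huv).mp this)
  exact hψ ▸ (Submodule.ne_bot_iff _).mpr ⟨v, hv, fun h ↦ huv (by simp [h])⟩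

end Unitary

theorem isCyclic_of_injective_of_unitary {G n L : Type*} [Group G] [Finite G] [Fintype n]
    [DecidableEq n] [Field L] [IsAlgClosed L] (hG : ∀ a b : G, Commute a b) {q : ℕ}
    (hGq : (Nat.card G).Coprime (q * (q ^ 2 - 1))) (hL : (Nat.card G : L) ≠ 0)
    (hn : Fintype.card n < 6) (φ : L →+* L) (hφ : ∀ a, φ a = a ^ q) (ρ : G →* Matrix n n L)
    (hρ : Function.Injective ρ) (hu : ∀ g, ((ρ g).map φ)ᵀ * ρ g = 1) : IsCyclic G := by
  let ρ' : G →* End L (n → L) := (Matrix.toLinAlgEquiv' : Matrix n n L ≃ₐ[L] _).toMonoidHom.comp ρ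
  have hcomm (g h : G) : Commute (ρ' g) (ρ' h) := (hG g h).map ρ'
  have htop := iSup_jointEigenspace_eq_top hcomm (isSemisimple_apply_of_natCard_ne_zero ρ' hL)
  set W := {χ : G → L | jointEigenspace ρ' χ ≠ ⊥}
  have hval : ∀ χ ∈ W, ∀ g, χ g ^ Nat.card G = 1 := fun χ hχ g ↦ by
    have := (map_pow (weightHom ρ' χ hχ) g (Nat.card G)).symm
    rwa [pow_card_eq_one', map_one] at this
  have hσ : ∀ χ ∈ W, (fun g ↦ (χ g ^ q)⁻¹) ∈ W := fun χ hχ ↦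
    show jointEigenspace (fun g ↦ toLin' (ρ g)) _ ≠ ⊥ by
      simpa [hφ] using jointEigenspace_inv_ne_bot φ hu htop hχ
  have hsep (g : G) (hg : g ≠ 1) : ∃ χ ∈ W, χ g ≠ 1 :=
    exists_jointEigenspace_ne_bot_of_ne_one htop (by simpa [ρ'] using hρ.ne hg)
  have hcard : W.ncard < 6 := by
    simpa using (ncard_setOf_jointEigenspace_ne_bot_le hcomm).trans_lt (by simpa using hn)
  rcases subsingleton_or_nontrivial G with _ | _
  · infer_instance
  obtain ⟨h, hh⟩ := exists_ne (1 : G)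
  obtain ⟨χ, hχ, hχh⟩ := hsep h hh
  refine isCyclic_of_injective_ringHom (weightHom ρ' χ hχ)
    ((injective_iff_map_eq_one _).mpr fun g hχg ↦ by_contra fun hg ↦ ?_)
  obtain ⟨ψ, hψ, hψg⟩ := hsep g hg
  exact hcard.not_ge (six_le_ncard_of_inv_pow_mem Nat.card_pos.ne' hGq
    (finite_setOf_jointEigenspace_ne_bot hcomm) hval hσ hχ hψ hχg hχh hψg)

theorem Nat.cast_ne_zero_of_coprime {R : Type*} [CommRing R] [Nontrivial R] {m n : ℕ}
    (h : m.Coprime n) (hn : (n : R) = 0) : (m : R) ≠ 0 := by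
  have := (Nat.isCoprime_iff_coprime.mpr h).map (Int.castRingHom R)
  simp only [eq_intCast, Int.cast_natCast, hn, isCoprime_zero_right] at this
  exact this.ne_zero

theorem Nat.Prime.five_le_of_not_dvd_mul_sq_sub_one {ℓ q : ℕ} (hℓ : ℓ.Prime)
    (h : ¬ℓ ∣ q * (q ^ 2 - 1)) : 5 ≤ ℓ := by
  rw [show q ^ 2 - 1 = (q + 1) * (q - 1) by rw [← Nat.sq_sub_sq, one_pow]] at h
  have h1 : ¬ℓ ∣ q := fun h' ↦ h (h'.mul_right _)
  have h2 : ¬ℓ ∣ q + 1 := fun h' ↦ h ((h'.mul_right _).mul_left _)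
  have h3 : ¬ℓ ∣ q - 1 := fun h' ↦ h ((h'.mul_left _).mul_left _)
  have := hℓ.two_le
  by_contra!
  interval_cases ℓ
  · omega
  · omega
  · norm_num at hℓ

theorem exists_ringHom_pow_eq_of_card_eq_sq {K : Type*} [Field K] [Fintype K] {q : ℕ}
    (hK : Fintype.card K = q ^ 2) (L : Type*) [Field L] [Algebra K L] :
    ∃ φ : L →+* L, (∀ a, φ a = a ^ q) ∧ (q : L) = 0 := by
  obtain ⟨n, hp, hn⟩ := FiniteField.card K (ringChar K)
  obtain ⟨m, -, hq⟩ := (Nat.dvd_prime_pow hp).mp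
    (show q ∣ ringChar K ^ (n : ℕ) from hn ▸ hK ▸ dvd_pow_self q two_ne_zero)
  have := Fact.mk hp
  have := charP_of_injective_algebraMap (algebraMap K L).injective (ringChar K)
  refine ⟨iterateFrobenius L (ringChar K) m, fun a ↦ by rw [iterateFrobenius_def, hq], ?_⟩
  have hqK : (q : K) = 0 :=
    pow_eq_zero_iff two_ne_zero |>.mp (by rw [← Nat.cast_pow, ← hK, FiniteField.cast_card_eq_zero])
  rw [← map_natCast (algebraMap K L), hqK, map_zero]

namespace specialUnitarySubgroup

variable (n : ℕ) (K : Type) (L : Type*) [Field K] [StarRing K] [Field L] [Algebra K L]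

def toMatrix : specialUnitarySubgroup n K →* Matrix (Fin n) (Fin n) L :=
  (SpecialLinearGroup.coeMonoidHom.comp (SpecialLinearGroup.map (algebraMap K L))).comp
    (specialUnitarySubgroup n K).subtype

variable {n K L}

theorem toMatrix_injective : Function.Injective (toMatrix n K L) := by
  intro g h hgh
  exact Subtype.ext (Subtype.ext (Matrix.map_injective (algebraMap K L).injective hgh))

theorem toMatrix_unitary (φ : L →+* L) (hφ : ∀ x, φ (algebraMap K L x) = algebraMap K L (star x))
    (g : specialUnitarySubgroup n K) : ((toMatrix n K L g).map φ)ᵀ * toMatrix n K L g = 1 := by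
  have h := congrArg (algebraMap K L).mapMatrix (Unitary.star_mul_self_of_mem g.2)
  rw [map_mul, map_one, star_eq_conjTranspose] at h
  have e : ((toMatrix n K L g).map φ)ᵀ =
      (algebraMap K L).mapMatrix (g : Matrix (Fin n) (Fin n) K)ᴴ := by
    ext i j
    simp [toMatrix, hφ]
  rw [e]
  exact h

end specialUnitarySubgroup

open specialUnitarySubgroup in
theorem sylow_cyclic_SU4_general
    (q ℓ : ℕ) (hℓ : ℓ.Prime)
    (hdvd : ¬ ℓ ∣ q * (q ^ 2 - 1))
    (K : Type) [Field K] [Fintype K] [StarRing K]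
    (hK : Fintype.card K = q ^ 2) (hstar : ∀ x : K, star x = x ^ q)
    (P : Sylow ℓ ↥(specialUnitarySubgroup 4 K)) :
    IsCyclic ↥(P : Subgroup ↥(specialUnitarySubgroup 4 K)) := by
  have := Fact.mk hℓ
  set L := AlgebraicClosure K
  obtain ⟨φ, hφ, hqL⟩ := exists_ringHom_pow_eq_of_card_eq_sq hK L
  obtain ⟨k, hk⟩ := IsPGroup.iff_card.mp P.isPGroup'
  have hPq : (Nat.card P).Coprime (q * (q ^ 2 - 1)) :=
    hk ▸ (hℓ.coprime_iff_not_dvd.mpr hdvd).pow_left k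
  have hPL : (Nat.card P : L) ≠ 0 :=
    Nat.cast_ne_zero_of_coprime (Nat.Coprime.coprime_mul_right_right hPq) hqL
  let ρ := (toMatrix 4 K L).comp (P : Subgroup (specialUnitarySubgroup 4 K)).subtype
  have hρ : Function.Injective ρ := toMatrix_injective.comp Subtype.val_injective
  have := P.isPGroup'.isNilpotent
  refine isCyclic_of_injective_of_unitary ?_ hPq hPL (by simp) φ hφ ρ hρ
    fun g ↦ toMatrix_unitary φ (fun x ↦ by rw [hφ, hstar, map_pow]) _
  refine commute_of_injective_of_coprime_finrank
    ((Matrix.toLinAlgEquiv' : Matrix (Fin 4) (Fin 4) L ≃ₐ[L] _).toMonoidHom.comp ρ)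
    (Matrix.toLinAlgEquiv'.injective.comp hρ) hPL fun i hi ↦ ?_
  rw [finrank_fin_fun, Finset.mem_Icc] at hi
  exact hk ▸ (Nat.coprime_of_lt_prime (by omega)
    (by linarith [hℓ.five_le_of_not_dvd_mul_sq_sub_one hdvd]) hℓ).pow_left k

/-- If `ℓ` is an odd prime with `ℓ ∤ q(q² − 1)`, then the Sylow `ℓ`-subgroups of
`SU₄(q)` are cyclic.  Here `SU₄(q)` is realized inside `SL₄(K)` for `K` the field with
`q²` elements, equipped with the star operation `x ↦ x^q`. -/
theorem sylow_cyclic_SU4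
    (q ℓ : ℕ) (hq : IsPrimePow q) (hℓ : ℓ.Prime) (hodd : Odd ℓ)
    (hdvd : ¬ ℓ ∣ q * (q ^ 2 - 1))
    (K : Type) [Field K] [Fintype K] [StarRing K]
    (hK : Fintype.card K = q ^ 2) (hstar : ∀ x : K, star x = x ^ q)
    (P : Sylow ℓ ↥(specialUnitarySubgroup 4 K)) :
    IsCyclic ↥(P : Subgroup ↥(specialUnitarySubgroup 4 K)) :=
  sylow_cyclic_SU4_general q ℓ hℓ hdvd K hK hstar P
end

section
/- Let q be a prime power, m, d positive integers, A an abelian group whose exponent divides q − 1, and ι : GL_m(𝔽_{q^d}) → A a group homomorphism. Then ι ∘ F = ι, where F is the entrywise q-power Frobenius automorphism of GL_m(𝔽_{q^d}); equivalently, F acts trivially on the quotient GL_m(𝔽_{q^d})/ker ι. -/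
/-!
`GL_m(𝔽_{q^d})` is generated by invertible diagonal matrices and transvections, so it suffices
to compare `ι ∘ F` and `ι` on these. On a diagonal matrix `F` is the `q`-th power map, and
`ι (D ^ q) = ι D` because `ι D ^ (q - 1) = 1`. A transvection `t` has order dividing the
characteristic, hence `t ^ q = 1`, so `ι t = ι (t ^ q) = 1`; and `F t` is again a transvection.
-/

open Matrix

lemma MonoidHom.map_pow_eq_self_of_forall_pow_sub_one_eq_one {G A : Type*} [Monoid G] [Monoid A]
    (ι : G →* A) {q : ℕ} (hq : 0 < q) (hA : ∀ a : A, a ^ (q - 1) = 1) (g : G) :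
    ι (g ^ q) = ι g := by
  rw [map_pow, ← Nat.sub_add_cancel hq, pow_succ, hA, one_mul]

lemma FiniteField.natCast_eq_zero_of_card_eq_pow {K : Type*} [Field K] [Fintype K] {q d : ℕ}
    (hK : Fintype.card K = q ^ d) : (q : K) = 0 :=
  eq_zero_of_pow_eq_zero (n := d) (by exact_mod_cast hK ▸ FiniteField.cast_card_eq_zero K)

namespace Matrix

variable {n R : Type*} [DecidableEq n] [CommRing R]

lemma map_transvection {S : Type*} [CommRing S] (f : R →+* S) (i j : n) (c : R) :
    (transvection i j c).map f = transvection i j (f c) := by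
  rw [transvection, Matrix.map_add _ (map_add f), Matrix.map_one _ (map_zero f) (map_one f),
    map_single, transvection]

variable [Fintype n]

lemma transvection_pow {i j : n} (hij : i ≠ j) (c : R) (k : ℕ) :
    transvection i j c ^ k = transvection i j (k * c) := by
  induction k with
  | zero => simp
  | succ k ih =>
    rw [pow_succ, ih, transvection_mul_transvection_same i j hij]
    push_cast
    ring_nf

lemma transvection_pow_eq_one_of_natCast_eq_zero {i j : n} (hij : i ≠ j) (c : R) {q : ℕ}
    (hq : (q : R) = 0) : transvection i j c ^ q = 1 := by
  rw [transvection_pow hij, hq, zero_mul, transvection_zero]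

lemma GeneralLinearGroup.pow_eq_one_of_val_eq_transvection {i j : n} (hij : i ≠ j) {c : R}
    {q : ℕ} (hq : (q : R) = 0) {u : GL n R} (hu : (u : Matrix n n R) = transvection i j c) :
    u ^ q = 1 := by
  ext1
  rw [Units.val_pow_eq_pow_val, hu, transvection_pow_eq_one_of_natCast_eq_zero hij c hq,
    Units.val_one]

lemma GeneralLinearGroup.map_eq_one_of_val_eq_transvection {A : Type*} [Monoid A]
    (ι : GL n R →* A) {q : ℕ} (hq0 : 0 < q) (hq : (q : R) = 0)
    (hA : ∀ a : A, a ^ (q - 1) = 1) {i j : n} (hij : i ≠ j) {c : R} {u : GL n R}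
    (hu : (u : Matrix n n R) = transvection i j c) : ι u = 1 := by
  rw [← ι.map_pow_eq_self_of_forall_pow_sub_one_eq_one hq0 hA,
    pow_eq_one_of_val_eq_transvection hij hq hu, map_one]

lemma GeneralLinearGroup.hom_ext_of_diagonal_of_transvection {𝕜 M : Type*} [Field 𝕜] [Monoid M]
    {f g : GL n 𝕜 →* M}
    (hdiag : ∀ (D : n → 𝕜) (u : GL n 𝕜), (u : Matrix n n 𝕜) = diagonal D → f u = g u)
    (htransvec : ∀ (t : TransvectionStruct n 𝕜) (u : GL n 𝕜),
      (u : Matrix n n 𝕜) = t.toMatrix → f u = g u) :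
    f = g := by
  ext1 u
  refine diagonal_transvection_induction_of_det_ne_zero
    (fun N => ∀ u : GL n 𝕜, (u : Matrix n n 𝕜) = N → f u = g u) u
    ((isUnit_iff_isUnit_det _).1 u.isUnit).ne_zero (fun D _ => hdiag D) htransvec ?_ u rfl
  intro P Q hP hQ ihP ihQ u hu
  have hsplit : u = mkOfDetNeZero P hP * mkOfDetNeZero Q hQ := Units.ext hu
  rw [hsplit, map_mul, map_mul, ihP _ rfl, ihQ _ rfl]

lemma GeneralLinearGroup.map_mapMatrix_eq_pow_of_val_eq_diagonal {φ : R →+* R} {q : ℕ}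
    (hφ : ∀ x, φ x = x ^ q) {D : n → R} {u : GL n R} (hu : (u : Matrix n n R) = diagonal D) :
    Units.map φ.mapMatrix.toMonoidHom u = u ^ q := by
  ext1
  simp only [Units.coe_map, Units.val_pow_eq_pow_val, hu, diagonal_pow, MonoidHom.coe_coe,
    RingHom.toMonoidHom_eq_coe, RingHom.mapMatrix_apply, diagonal_map (map_zero φ)]
  exact congrArg diagonal (funext fun i => hφ (D i))

end Matrix

theorem hom_to_exponent_sub_one_frobenius_invariant_general
    (q : ℕ) (hq : IsPrimePow q) (m d : ℕ)
    (F : Type) [Field F] [Fintype F] (hF : Fintype.card F = q ^ d)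
    (A : Type) [CommGroup A] (hA : ∀ a : A, a ^ (q - 1) = 1)
    (φ : F →+* F) (hφ : ∀ x : F, φ x = x ^ q)
    (ι : Matrix.GeneralLinearGroup (Fin m) F →* A) :
    ∀ g : Matrix.GeneralLinearGroup (Fin m) F,
      ι (Units.map (RingHom.mapMatrix φ).toMonoidHom g) = ι g := by
  have hqF : (q : F) = 0 := FiniteField.natCast_eq_zero_of_card_eq_pow hF
  refine DFunLike.congr_fun (GeneralLinearGroup.hom_ext_of_diagonal_of_transvection
    (f := ι.comp (Units.map (RingHom.mapMatrix φ).toMonoidHom)) ?_ ?_)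
  · intro D u hu
    rw [MonoidHom.comp_apply, GeneralLinearGroup.map_mapMatrix_eq_pow_of_val_eq_diagonal hφ hu,
      ι.map_pow_eq_self_of_forall_pow_sub_one_eq_one hq.pos hA]
  · rintro ⟨i, j, hij, c⟩ u hu
    have hιt {c : F} {u : GL (Fin m) F} : (u : Matrix (Fin m) (Fin m) F) = transvection i j c →
        ι u = 1 :=
      GeneralLinearGroup.map_eq_one_of_val_eq_transvection ι hq.pos hqF hA hij
    rw [MonoidHom.comp_apply, hιt hu, hιt (c := φ c)]
    simp only [Units.coe_map, RingHom.toMonoidHom_eq_coe, MonoidHom.coe_coe,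
      RingHom.mapMatrix_apply, hu, TransvectionStruct.toMatrix_mk, map_transvection]

theorem hom_to_exponent_sub_one_frobenius_invariant
    (q : ℕ) (hq : IsPrimePow q) (m d : ℕ) (hm : 0 < m) (hd : 0 < d)
    (F : Type) [Field F] [Fintype F] [DecidableEq F] (hF : Fintype.card F = q ^ d)
    (A : Type) [CommGroup A] (hA : ∀ a : A, a ^ (q - 1) = 1)
    (φ : F →+* F) (hφ : ∀ x : F, φ x = x ^ q)
    (ι : Matrix.GeneralLinearGroup (Fin m) F →* A) :
    ∀ g : Matrix.GeneralLinearGroup (Fin m) F,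
      ι (Units.map (RingHom.mapMatrix φ).toMonoidHom g) = ι g :=
  hom_to_exponent_sub_one_frobenius_invariant_general q hq m d F hF A hA φ hφ ι
end
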